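/- arXiv:1907.10350 — 5 statements merged into one kernel-verified Lean document; each statement's English description precedes it below -/
import Mathlib

section
/- Let R be a finite ring, let r ∈ R with r ≠ 0, and let x ∈ R. In the r-noncommuting graph Γ_R^r, the degree of the vertex x equals |R| - |T_{x,r}| - 1 if 2r = 0, and equals |R| - 2|T_{x,r}| - 1 if 2r ≠ 0. -/
/-! The non-neighbours of `x` in `Γ_R^r` are `x` itself and `T_{x,r} ∪ T_{x,-r}`; since
`y ↦ -y` maps `T_{x,r}` onto `T_{x,-r}`, the two pieces have the same size, and they coincide
exactly when `2r = 0` and are disjoint otherwise. -/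

/-- The `r`-noncommuting graph of a finite ring `R`: vertices are elements of `R`,
and distinct `x`, `y` are adjacent iff `x*y - y*x ≠ r` and `x*y - y*x ≠ -r`. -/
def ncGraph {R : Type*} [NonUnitalRing R] (r : R) : SimpleGraph R where
  Adj x y := x ≠ y ∧ x * y - y * x ≠ r ∧ x * y - y * x ≠ -r
  symm := ⟨by
    rintro x y ⟨h1, h2, h3⟩
    refine ⟨h1.symm, fun h => h3 ?_, fun h => h2 ?_⟩
    · rw [← neg_sub (y * x) (x * y), h]
    · rw [← neg_sub (y * x) (x * y), h, neg_neg]⟩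
  loopless := ⟨fun x h => h.1 rfl⟩

open Pointwise

/-- The generalized centralizer `T_{x,r}`. -/
def genCentralizer {R : Type*} [NonUnitalRing R] (x r : R) : Set R :=
  {y | x * y - y * x = r}

section

variable {R : Type*} [NonUnitalRing R]

theorem mem_genCentralizer {x r y : R} : y ∈ genCentralizer x r ↔ x * y - y * x = r :=
  Iff.rfl

theorem self_notMem_genCentralizer {x r : R} (hr : r ≠ 0) : x ∉ genCentralizer x r := by
  rw [mem_genCentralizer, sub_self]
  exact hr.symm

theorem genCentralizer_neg (x r : R) : genCentralizer x (-r) = -genCentralizer x r := by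
  ext y
  rw [Set.mem_neg, mem_genCentralizer, mem_genCentralizer, mul_neg, neg_mul, sub_neg_eq_add,
    neg_add_eq_sub, ← neg_sub, neg_inj]

theorem disjoint_genCentralizer {x r s : R} (hrs : r ≠ s) :
    Disjoint (genCentralizer x r) (genCentralizer x s) :=
  Set.disjoint_left.mpr fun _ hr hs => hrs (hr.symm.trans hs)

theorem ncGraph_neighborSet (r x : R) :
    (ncGraph r).neighborSet x = (insert x (genCentralizer x r ∪ genCentralizer x (-r)))ᶜ := by
  ext y
  simp only [SimpleGraph.mem_neighborSet, ncGraph, Set.mem_compl_iff, Set.mem_insert_iff,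
    Set.mem_union, mem_genCentralizer, not_or, eq_comm (a := y)]

theorem ncard_neighborSet_ncGraph [Finite R] {r : R} (hr : r ≠ 0) (x : R) :
    ((ncGraph r).neighborSet x).ncard
      = Nat.card R - (genCentralizer x r ∪ genCentralizer x (-r)).ncard - 1 := by
  have hx : x ∉ genCentralizer x r ∪ genCentralizer x (-r) := by
    rw [Set.mem_union, not_or]
    exact ⟨self_notMem_genCentralizer hr, self_notMem_genCentralizer (neg_ne_zero.mpr hr)⟩
  rw [ncGraph_neighborSet, Set.ncard_compl, Set.ncard_insert_of_notMem hx, Nat.sub_add_eq]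

end

/-- for r ≠ 0, degree of x in Γ_R^r is |R| - |T_{x,r}| - 1 if 2r = 0
and |R| - 2|T_{x,r}| - 1 if 2r ≠ 0. -/
theorem stmt1 {R : Type*} [NonUnitalRing R] [Fintype R] (r : R) (hr : r ≠ 0) (x : R) :
    (r + r = 0 →
      ((ncGraph r).neighborSet x).ncard
        = Nat.card R - ({y : R | x * y - y * x = r}).ncard - 1) ∧
    (r + r ≠ 0 →
      ((ncGraph r).neighborSet x).ncard
        = Nat.card R - 2 * ({y : R | x * y - y * x = r}).ncard - 1) := by
  rw [ncard_neighborSet_ncGraph hr]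
  refine ⟨fun h2r => ?_, fun h2r => ?_⟩
  · rw [neg_eq_of_add_eq_zero_left h2r, Set.union_self]
    rfl
  · have hr_ne_neg : r ≠ -r := fun h => h2r (eq_neg_iff_add_eq_zero.mp h)
    rw [Set.ncard_union_eq (disjoint_genCentralizer hr_ne_neg), genCentralizer_neg,
      Set.ncard_neg, two_mul]
    rfl
end

section
/- Let R be a finite ring. Then the 0-noncommuting graph Γ_R^0 is not complete bipartite; that is, there do not exist disjoint nonempty subsets V₁, V₂ of R with V₁ ∪ V₂ = R such that two distinct vertices x and y are adjacent in Γ_R^0 if and only if one of them lies in V₁ and the other in V₂. -/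
theorem ncGraph_zero_adj_iff {R : Type*} [NonUnitalRing R] {x y : R} :
    (ncGraph (0 : R)).Adj x y ↔ x ≠ y ∧ ¬Commute x y := by
  simp only [ncGraph, neg_zero, and_self, ne_eq, sub_eq_zero, Commute, SemiconjBy]

theorem ncGraph_zero_not_adj_zero {R : Type*} [NonUnitalRing R] (y : R) :
    ¬(ncGraph (0 : R)).Adj 0 y :=
  fun h => (ncGraph_zero_adj_iff.mp h).2 (Commute.zero_left y)

theorem SimpleGraph.exists_adj_of_isCompleteBipartite {V : Type*} (G : SimpleGraph V)
    {V₁ V₂ : Set V} (h₁ : V₁.Nonempty) (h₂ : V₂.Nonempty) (hdisj : Disjoint V₁ V₂)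
    (hunion : V₁ ∪ V₂ = Set.univ)
    (hadj : ∀ x y, x ≠ y → (G.Adj x y ↔ (x ∈ V₁ ∧ y ∈ V₂) ∨ (x ∈ V₂ ∧ y ∈ V₁))) (v : V) :
    ∃ w, G.Adj v w := by
  obtain ⟨a, ha⟩ := h₁
  obtain ⟨b, hb⟩ := h₂
  have hv : v ∈ V₁ ∪ V₂ := hunion ▸ Set.mem_univ v
  rcases hv with hv | hv
  · have hvb : v ≠ b := hdisj.ne_of_mem hv hb
    exact ⟨b, (hadj v b hvb).mpr (Or.inl ⟨hv, hb⟩)⟩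
  · have hva : v ≠ a := (hdisj.ne_of_mem ha hv).symm
    exact ⟨a, (hadj v a hva).mpr (Or.inr ⟨hv, ha⟩)⟩

theorem stmt8_general {R : Type*} [NonUnitalRing R] :
    ¬ ∃ V₁ V₂ : Set R, V₁.Nonempty ∧ V₂.Nonempty ∧ Disjoint V₁ V₂ ∧ V₁ ∪ V₂ = Set.univ ∧
      ∀ x y : R, x ≠ y →
        ((ncGraph (0 : R)).Adj x y ↔ (x ∈ V₁ ∧ y ∈ V₂) ∨ (x ∈ V₂ ∧ y ∈ V₁)) := by
  rintro ⟨V₁, V₂, h₁, h₂, hdisj, hunion, hadj⟩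
  obtain ⟨w, hw⟩ := (ncGraph (0 : R)).exists_adj_of_isCompleteBipartite h₁ h₂ hdisj hunion hadj 0
  exact ncGraph_zero_not_adj_zero w hw

/-- Γ_R^0 is not complete bipartite. -/
theorem stmt8 {R : Type*} [NonUnitalRing R] [Fintype R] :
    ¬ ∃ V₁ V₂ : Set R, V₁.Nonempty ∧ V₂.Nonempty ∧ Disjoint V₁ V₂ ∧ V₁ ∪ V₂ = Set.univ ∧
      ∀ x y : R, x ≠ y →
        ((ncGraph (0 : R)).Adj x y ↔ (x ∈ V₁ ∧ y ∈ V₂) ∨ (x ∈ V₂ ∧ y ∈ V₁)) :=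
  stmt8_general
end

section
/- Let R be a finite ring with |R| ≥ 3 and |Z(R)| ≥ 2, and let r ∈ R with r ≠ 0. Then the r-noncommuting graph Γ_R^r is not complete bipartite; that is, there do not exist disjoint nonempty subsets V₁, V₂ of R with V₁ ∪ V₂ = R such that two distinct vertices x and y are adjacent in Γ_R^r if and only if one of them lies in V₁ and the other in V₂. -/
/-- The center of R as a set. -/
def centerSet (R : Type*) [NonUnitalRing R] : Set R := {z | ∀ x, z * x = x * z}

/-!
A central element has commutator `0 ≠ ±r` with every element, so it is adjacent to every other
vertex. Two central elements together with any third element therefore form a triangle, which a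
bipartite graph cannot contain.
-/

section

open SimpleGraph

variable {R : Type*} [NonUnitalRing R] {r : R}

theorem ncGraph_adj_of_mem_centerSet (hr : r ≠ 0) {z x : R} (hz : z ∈ centerSet R) (hzx : z ≠ x) :
    (ncGraph r).Adj z x := by
  refine ⟨hzx, ?_, ?_⟩ <;> rw [hz x, sub_self]
  · exact hr.symm
  · exact (neg_ne_zero.mpr hr).symm

theorem ncGraph_not_cliqueFree_three (hcard : 3 ≤ Nat.card R) (hZ : 2 ≤ (centerSet R).ncard)
    (hr : r ≠ 0) : ¬ (ncGraph r).CliqueFree 3 := by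
  classical
  obtain ⟨⟨z₁, hz₁, z₂, hz₂, hz₁₂⟩, -⟩ := Set.one_lt_ncard_iff_nontrivial_and_finite.mp hZ
  obtain ⟨x, -, hx⟩ : ∃ x ∈ Set.univ, x ∉ ({z₁, z₂} : Set R) := by
    refine Set.exists_mem_notMem_of_ncard_lt_ncard ?_
    rw [Set.ncard_pair hz₁₂, Set.ncard_univ]
    omega
  simp only [Set.mem_insert_iff, Set.mem_singleton_iff, not_or] at hx
  refine fun hfree => hfree {z₁, z₂, x} (is3Clique_triple_iff.mpr ⟨?_, ?_, ?_⟩)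
  · exact ncGraph_adj_of_mem_centerSet hr hz₁ hz₁₂
  · exact ncGraph_adj_of_mem_centerSet hr hz₁ (Ne.symm hx.1)
  · exact ncGraph_adj_of_mem_centerSet hr hz₂ (Ne.symm hx.2)

end

theorem stmt9_general {R : Type*} [NonUnitalRing R]
    (hcard : 3 ≤ Nat.card R) (hZ : 2 ≤ (centerSet R).ncard) (r : R) (hr : r ≠ 0) :
    ¬ ∃ V₁ V₂ : Set R, V₁.Nonempty ∧ V₂.Nonempty ∧ Disjoint V₁ V₂ ∧ V₁ ∪ V₂ = Set.univ ∧
      ∀ x y : R, x ≠ y →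
        ((ncGraph r).Adj x y ↔ (x ∈ V₁ ∧ y ∈ V₂) ∨ (x ∈ V₂ ∧ y ∈ V₁)) := by
  rintro ⟨V₁, V₂, -, -, hdisj, -, hadj⟩
  have hbip : (ncGraph r).IsBipartiteWith V₁ V₂ :=
    ⟨hdisj, fun x y hxy => (hadj x y hxy.ne).mp hxy⟩
  exact ncGraph_not_cliqueFree_three hcard hZ hr (hbip.isBipartite.cliqueFree (by norm_num))

/-- if |R| ≥ 3, |Z(R)| ≥ 2 and r ≠ 0 then Γ_R^r is not complete bipartite. -/
theorem stmt9 {R : Type*} [NonUnitalRing R] [Fintype R]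
    (hcard : 3 ≤ Nat.card R) (hZ : 2 ≤ (centerSet R).ncard) (r : R) (hr : r ≠ 0) :
    ¬ ∃ V₁ V₂ : Set R, V₁.Nonempty ∧ V₂.Nonempty ∧ Disjoint V₁ V₂ ∧ V₁ ∪ V₂ = Set.univ ∧
      ∀ x y : R, x ≠ y →
        ((ncGraph r).Adj x y ↔ (x ∈ V₁ ∧ y ∈ V₂) ∨ (x ∈ V₂ ∧ y ∈ V₁)) :=
  stmt9_general hcard hZ r hr
end

section
/- Let R be a finite ring, let r ∈ R, and let x ∈ R ∖ Z(R) be a vertex of Δ_R^r. Then: (a) if r = 0, the degree of x in Δ_R^r equals |R| - |C_R(x)|; (b) if r ≠ 0 and 2r = 0, the degree of x equals |R| - |Z(R)| - 1 when T_{x,r} = ∅ and equals |R| - |Z(R)| - |C_R(x)| - 1 otherwise; (c) if r ≠ 0 and 2r ≠ 0, the degree of x equals |R| - |Z(R)| - 1 when T_{x,r} = ∅ and equals |R| - |Z(R)| - 2|C_R(x)| - 1 otherwise. -/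
/-- The induced subgraph of the r-noncommuting graph on the non-central elements. -/
def deltaGraph {R : Type*} [NonUnitalRing R] (r : R) :
    SimpleGraph {x : R // x ∉ centerSet R} :=
  (ncGraph r).comap Subtype.val

/-!
For `x ∉ Z(R)`, the elements of `R` that are not neighbours of `x` in `Δ_R^r` are those of `Z(R)`,
`x` itself, and those of `T_{x,r} ∪ T_{x,-r}`. Each nonempty `T_{x,s}` is a translate `t + C_R(x)` of the centralizer, since
`y ↦ xy - yx` is additive; and `T_{x,-r} = -T_{x,r}`. So `T_{x,r} ∪ T_{x,-r}` is empty, one coset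
(when `r = -r`), or two disjoint cosets. For `r = 0` the non-neighbours form exactly `C_R(x)`, which
contains `Z(R)` and `x`.
-/

section CommFiber

variable {R : Type*} [NonUnitalNonAssocRing R]

/-- The set `T_{x,s}` of the paper. -/
def commFiber (x s : R) : Set R := {y | x * y - y * x = s}

lemma mem_commFiber {x s y : R} : y ∈ commFiber x s ↔ x * y - y * x = s := Iff.rfl

lemma commFiber_zero (x : R) : commFiber x 0 = {y | x * y = y * x} :=
  Set.ext fun _ => sub_eq_zero

lemma disjoint_commFiber (x : R) {s s' : R} (h : s ≠ s') :
    Disjoint (commFiber x s) (commFiber x s') :=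
  Set.disjoint_left.2 fun _ hs hs' => h (hs.symm.trans hs')

lemma commutator_add_right (x y t : R) :
    x * (y + t) - (y + t) * x = (x * y - y * x) + (x * t - t * x) := by
  rw [mul_add, add_mul]; abel

lemma commutator_neg_right (x y : R) : x * -y - -y * x = -(x * y - y * x) := by
  rw [mul_neg, neg_mul]; abel

lemma neg_mem_commFiber {x s y : R} (h : y ∈ commFiber x s) : -y ∈ commFiber x (-s) := by
  rw [mem_commFiber, commutator_neg_right, h]

lemma commFiber_neg_eq_empty {x s : R} (h : commFiber x s = ∅) : commFiber x (-s) = ∅ :=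
  Set.eq_empty_of_forall_notMem fun y hy => by
    simpa [h] using neg_mem_commFiber hy

lemma commFiber_eq_image_add_right {x s t : R} (ht : t ∈ commFiber x s) :
    commFiber x s = (· + t) '' commFiber x 0 := by
  ext y
  refine ⟨fun hy => ⟨y - t, ?_, sub_add_cancel y t⟩, ?_⟩
  · have h := commutator_add_right x (y - t) t
    rwa [sub_add_cancel, hy, ht, right_eq_add] at h
  · rintro ⟨z, hz, rfl⟩
    rw [mem_commFiber, commutator_add_right, hz, ht, zero_add]

lemma ncard_commFiber_of_mem {x s t : R} (ht : t ∈ commFiber x s) :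
    (commFiber x s).ncard = (commFiber x 0).ncard := by
  rw [commFiber_eq_image_add_right ht, Set.ncard_image_of_injective _ (add_left_injective t)]

end CommFiber

section DeltaGraph

variable {R : Type*} [NonUnitalRing R]

lemma insert_centerSet_subset_commFiber_zero (x : R) :
    insert x (centerSet R) ⊆ commFiber x 0 := by
  rintro z (rfl | hz)
  · exact mem_commFiber.2 (sub_self (z * z))
  · exact sub_eq_zero.2 (hz x).symm

lemma image_val_neighborSet_deltaGraph (r x : R) (hx : x ∉ centerSet R) :
    Subtype.val '' (deltaGraph r).neighborSet ⟨x, hx⟩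
      = (insert x (centerSet R) ∪ (commFiber x r ∪ commFiber x (-r)))ᶜ := by
  ext z
  simp only [Set.mem_image, SimpleGraph.mem_neighborSet, deltaGraph, ncGraph,
    SimpleGraph.comap_adj, Subtype.exists, exists_and_right, exists_eq_right, Set.mem_compl_iff,
    Set.mem_union, Set.mem_insert_iff, mem_commFiber, not_or, exists_prop]
  rw [ne_comm]
  tauto

lemma ncard_neighborSet_deltaGraph (r x : R) (hx : x ∉ centerSet R) :
    ((deltaGraph r).neighborSet ⟨x, hx⟩).ncard
      = (insert x (centerSet R) ∪ (commFiber x r ∪ commFiber x (-r)))ᶜ.ncard := by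
  rw [← image_val_neighborSet_deltaGraph, Set.ncard_image_of_injective _ Subtype.val_injective]

variable [Finite R]

lemma ncard_neighborSet_deltaGraph_zero (x : R) (hx : x ∉ centerSet R) :
    ((deltaGraph 0).neighborSet ⟨x, hx⟩).ncard = Nat.card R - (commFiber x 0).ncard := by
  rw [ncard_neighborSet_deltaGraph, neg_zero, Set.union_self,
    Set.union_eq_self_of_subset_left (insert_centerSet_subset_commFiber_zero x), Set.ncard_compl]

lemma ncard_neighborSet_deltaGraph_of_ne_zero {r : R} (hr : r ≠ 0) (x : R)
    (hx : x ∉ centerSet R) :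
    ((deltaGraph r).neighborSet ⟨x, hx⟩).ncard
      = Nat.card R - (centerSet R).ncard - 1 - (commFiber x r ∪ commFiber x (-r)).ncard := by
  have hdisj : Disjoint (insert x (centerSet R)) (commFiber x r ∪ commFiber x (-r)) :=
    Disjoint.mono_left (insert_centerSet_subset_commFiber_zero x) <|
      Disjoint.union_right (disjoint_commFiber x hr.symm)
        (disjoint_commFiber x (neg_ne_zero.2 hr).symm)
  rw [ncard_neighborSet_deltaGraph, Set.ncard_compl, Set.ncard_union_eq hdisj,
    Set.ncard_insert_of_notMem hx]
  omega

end DeltaGraph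

/-- degrees of vertices in Δ_R^r. -/
theorem stmt15 {R : Type*} [NonUnitalRing R] [Fintype R] (r : R)
    (x : R) (hx : x ∉ centerSet R) :
    (r = 0 →
      ((deltaGraph r).neighborSet ⟨x, hx⟩).ncard
        = Nat.card R - ({y : R | x * y = y * x}).ncard) ∧
    (r ≠ 0 → r + r = 0 →
      (({y : R | x * y - y * x = r}) = ∅ →
        ((deltaGraph r).neighborSet ⟨x, hx⟩).ncard
          = Nat.card R - (centerSet R).ncard - 1) ∧
      (({y : R | x * y - y * x = r}) ≠ ∅ →
        ((deltaGraph r).neighborSet ⟨x, hx⟩).ncard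
          = Nat.card R - (centerSet R).ncard - ({y : R | x * y = y * x}).ncard - 1)) ∧
    (r ≠ 0 → r + r ≠ 0 →
      (({y : R | x * y - y * x = r}) = ∅ →
        ((deltaGraph r).neighborSet ⟨x, hx⟩).ncard
          = Nat.card R - (centerSet R).ncard - 1) ∧
      (({y : R | x * y - y * x = r}) ≠ ∅ →
        ((deltaGraph r).neighborSet ⟨x, hx⟩).ncard
          = Nat.card R - (centerSet R).ncard - 2 * ({y : R | x * y = y * x}).ncard - 1)) := by
  rw [← commFiber_zero]
  have of_empty (hr : r ≠ 0) (hT : commFiber x r = ∅) :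
      ((deltaGraph r).neighborSet ⟨x, hx⟩).ncard = Nat.card R - (centerSet R).ncard - 1 := by
    rw [ncard_neighborSet_deltaGraph_of_ne_zero hr, hT, commFiber_neg_eq_empty hT,
      Set.union_self, Set.ncard_empty, Nat.sub_zero]
  refine ⟨fun hr => ?_, fun hr h2 => ⟨of_empty hr, fun hT => ?_⟩,
    fun hr h2 => ⟨of_empty hr, fun hT => ?_⟩⟩
  · subst hr
    exact ncard_neighborSet_deltaGraph_zero x hx
  · obtain ⟨t, ht⟩ := Set.nonempty_iff_ne_empty.2 hT
    rw [ncard_neighborSet_deltaGraph_of_ne_zero hr, neg_eq_of_add_eq_zero_left h2, Set.union_self,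
      ncard_commFiber_of_mem ht]
    omega
  · obtain ⟨t, ht⟩ := Set.nonempty_iff_ne_empty.2 hT
    have hdisj : Disjoint (commFiber x r) (commFiber x (-r)) :=
      disjoint_commFiber x fun h => h2 (add_eq_zero_iff_eq_neg.2 h)
    rw [ncard_neighborSet_deltaGraph_of_ne_zero hr, Set.ncard_union_eq hdisj,
      ncard_commFiber_of_mem ht, ncard_commFiber_of_mem (neg_mem_commFiber ht)]
    omega
end

section
/- Let R be a finite noncommutative ring with |R| ≠ 8 and |R| ≠ 12, and let r ∈ K(R). Then Δ_R^r has a vertex of degree 2 if and only if r = 0 and |R| = 4 (equivalently, r = 0 and R is isomorphic to one of the two noncommutative rings E(4) or F(4) of order 4). -/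
lemma Odd.nsmul_eq_self_of_two_nsmul_eq_zero {G : Type*} [AddMonoid G] {m : ℕ} (hm : Odd m)
    {u : G} (hu : 2 • u = 0) : m • u = u := by
  obtain ⟨k, rfl⟩ := hm
  rw [add_nsmul, mul_nsmul, hu, nsmul_zero, zero_add, one_nsmul]

section AddGroup

variable {G : Type*} [AddCommGroup G] [Finite G]

lemma card_ker_nsmul_dvd_of_card_eq_mul {p m : ℕ} (hp : p.Prime) (hpm : ¬ p ∣ m)
    (hG : Nat.card G = p * m) : Nat.card (nsmulAddMonoidHom p : G →+ G).ker ∣ p := by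
  set T := (nsmulAddMonoidHom p : G →+ G).ker
  have hcop : Nat.Coprime (Nat.card T) m := Nat.coprime_of_dvd fun q hq hqT hqm => by
    have : Fact q.Prime := ⟨hq⟩
    obtain ⟨u, hu⟩ := exists_prime_addOrderOf_dvd_card' q hqT
    have hpu : p • (u : G) = 0 := u.2
    have hqp : q ∣ p := by
      rw [← hu, ← AddSubgroup.addOrderOf_coe]
      exact addOrderOf_dvd_of_nsmul_eq_zero hpu
    exact hpm ((Nat.prime_dvd_prime_iff_eq hq hp).mp hqp ▸ hqm)
  exact hcop.dvd_of_dvd_mul_right (hG ▸ AddSubgroup.card_addSubgroup_dvd_card T)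

lemma eq_of_two_nsmul_eq_zero_of_card_eq_two_mul_odd {m : ℕ} (hm : Odd m)
    (hG : Nat.card G = 2 * m) {u v : G} (hu : 2 • u = 0) (hv : 2 • v = 0)
    (hu0 : u ≠ 0) (hv0 : v ≠ 0) : u = v := by
  by_contra huv
  set T := (nsmulAddMonoidHom 2 : G →+ G).ker
  have hT : Nat.card T ≤ 2 := Nat.le_of_dvd two_pos <|
    card_ker_nsmul_dvd_of_card_eq_mul Nat.prime_two hm.not_two_dvd_nat hG
  have h3 : ({0, u, v} : Set G).ncard = 3 :=
    Set.ncard_eq_three.mpr ⟨0, u, v, hu0.symm, hv0.symm, huv, rfl⟩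
  have hsub : ({0, u, v} : Set G) ⊆ T := by
    rintro w (rfl | rfl | rfl)
    · exact T.zero_mem
    · exact hu
    · exact hv
  have := Set.ncard_le_ncard hsub
  rw [h3, ← Nat.card_coe_set_eq] at this
  exact absurd (this.trans hT) (by norm_num)

end AddGroup

lemma AddMonoidHom.ncard_preimage_pair_neg {G H : Type*} [AddGroup G] [AddGroup H] [Finite G]
    (f : G →+ H) (h : H) :
    (f ⁻¹' {h, -h}).ncard = 0 ∨ (f ⁻¹' {h, -h}).ncard = Nat.card f.ker ∨
      (f ⁻¹' {h, -h}).ncard = 2 * Nat.card f.ker := by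
  by_cases hh : ∃ g, f g = h
  · obtain ⟨g, rfl⟩ := hh
    have hfiber : ∀ a : G, (f ⁻¹' {f a}).ncard = Nat.card f.ker := fun a =>
      (Nat.card_coe_set_eq _).symm.trans (Nat.card_congr (f.fiberEquivKer a))
    by_cases hneg : f g = -f g
    · right; left
      rw [← hneg, Set.pair_eq_singleton, hfiber]
    · right; right
      rw [Set.insert_eq, Set.preimage_union, Set.ncard_union_eq, ← map_neg, hfiber, hfiber,
        two_mul]
      exact Set.disjoint_singleton.mpr hneg |>.preimage f
  · left
    rw [Set.ncard_eq_zero]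
    ext g
    simp only [Set.mem_preimage, Set.mem_insert_iff, Set.mem_singleton_iff,
      Set.mem_empty_iff_false, iff_false, not_or]
    exact ⟨fun hg => hh ⟨g, hg⟩, fun hg => hh ⟨-g, by rw [map_neg, hg, neg_neg]⟩⟩

lemma eq_four_of_dvd_of_lt {N z c s : ℕ} (hzc : z ∣ c) (hcN : c ∣ N) (hzc' : z < c)
    (hcN' : c < N) (hs : s = 0 ∨ s = c ∨ s = 2 * c) (hN : N = z + 3 + s) (h8 : N ≠ 8)
    (h12 : N ≠ 12) (heven : ∀ m, Odd m → N = 2 * m → 2 ∣ z) : N = 4 ∧ s = 0 := by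
  have hcs : c ∣ s := by rcases hs with rfl | rfl | rfl <;> simp
  have hz3 : z ∣ 3 := by
    have := hN ▸ hzc.trans hcN
    rwa [add_assoc, Nat.dvd_add_right dvd_rfl, Nat.dvd_add_left (hzc.trans hcs)] at this
  have hc : c ∣ z + 3 := by rwa [hN, Nat.dvd_add_left hcs] at hcN
  have h6 := heven 3 (by decide)
  have h18 := heven 9 (by decide)
  have := Nat.le_of_dvd (by norm_num) hz3
  have := Nat.le_of_dvd (by omega) hc
  interval_cases z <;> interval_cases c <;> omega

section Ring

variable {R : Type*} [NonUnitalRing R]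

def adHom (x : R) : R →+ R := AddMonoidHom.mulLeft x - AddMonoidHom.mulRight x

@[simp] lemma adHom_apply (x y : R) : adHom x y = x * y - y * x := rfl

lemma mem_centerSet_iff {z : R} : z ∈ centerSet R ↔ z ∈ NonUnitalSubring.center R := by
  rw [NonUnitalSubring.mem_center_iff]
  exact forall_congr' fun _ => eq_comm

lemma center_le_ker_adHom (x : R) :
    (NonUnitalSubring.center R).toAddSubgroup ≤ (adHom x).ker := fun z hz => by
  simp [(NonUnitalSubring.mem_center_iff.mp hz x)]

lemma card_center_dvd_card_ker_adHom (x : R) :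
    Nat.card (NonUnitalSubring.center R) ∣ Nat.card (adHom x).ker :=
  AddSubgroup.card_dvd_of_le (center_le_ker_adHom x)

lemma ker_adHom_ne_top {x : R} (hx : x ∉ centerSet R) : (adHom x).ker ≠ ⊤ := by
  intro h
  refine hx fun y => ?_
  have : y ∈ (adHom x).ker := h ▸ AddSubgroup.mem_top y
  simpa [sub_eq_zero] using this

variable [Finite R]

lemma two_dvd_card_center_of_card_eq_two_mul_odd {m : ℕ} (hm : Odd m)
    (hR : Nat.card R = 2 * m) : 2 ∣ Nat.card (NonUnitalSubring.center R) := by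
  have : Fact (Nat.Prime 2) := ⟨Nat.prime_two⟩
  obtain ⟨t, ht⟩ := exists_prime_addOrderOf_dvd_card' (G := R) 2 (hR ▸ dvd_mul_right 2 m)
  have h2t : 2 • t = 0 := ht ▸ addOrderOf_nsmul_eq_zero t
  have ht0 : t ≠ 0 := by rintro rfl; simp at ht
  -- `v` and `m • v` have the same products with `t` since `2 • t = 0`, and the 2-torsion
  -- element `m • v` is `0` or `t`
  have hcentral : t ∈ NonUnitalSubring.center R := by
    refine NonUnitalSubring.mem_center_iff.mpr fun v => ?_
    have h2mv : 2 • m • v = 0 := by rw [← mul_nsmul', ← hR, card_nsmul_eq_zero']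
    have htv : t * m • v = t * v := by
      rw [mul_smul_comm,
        hm.nsmul_eq_self_of_two_nsmul_eq_zero (by rw [← smul_mul_assoc, h2t, zero_mul])]
    have hvt : m • v * t = v * t := by
      rw [smul_mul_assoc,
        hm.nsmul_eq_self_of_two_nsmul_eq_zero (by rw [← mul_smul_comm, h2t, mul_zero])]
    rw [← htv, ← hvt]
    by_cases hmv : m • v = 0
    · rw [hmv, zero_mul, mul_zero]
    · rw [eq_of_two_nsmul_eq_zero_of_card_eq_two_mul_odd hm hR h2mv h2t hmv ht0]
  have hle : AddSubgroup.zmultiples t ≤ (NonUnitalSubring.center R).toAddSubgroup :=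
    AddSubgroup.zmultiples_le.mpr hcentral
  have := AddSubgroup.card_dvd_of_le hle
  rwa [Nat.card_zmultiples, ht] at this

lemma card_center_lt_card_ker_adHom {x : R} (hx : x ∉ centerSet R) :
    Nat.card (NonUnitalSubring.center R) < Nat.card (adHom x).ker := by
  refine (AddSubgroup.card_le_of_le (center_le_ker_adHom x)).lt_of_ne fun h => hx ?_
  have hx' : x ∈ (adHom x).ker := by simp
  rw [← AddSubgroup.eq_of_le_of_card_ge (center_le_ker_adHom x) h.ge] at hx'
  exact mem_centerSet_iff.mpr hx'

lemma card_ker_adHom_lt_card {x : R} (hx : x ∉ centerSet R) :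
    Nat.card (adHom x).ker < Nat.card R :=
  (AddSubgroup.card_le_card_addGroup _).lt_of_ne fun h =>
    ker_adHom_ne_top hx (AddSubgroup.card_eq_iff_eq_top _ |>.mp h)

lemma ncard_neighborSet_deltaGraph_add (r : R) (x : {a : R // a ∉ centerSet R}) :
    ((deltaGraph r).neighborSet x).ncard +
      (centerSet R ∪ insert x.1 (adHom x.1 ⁻¹' {r, -r})).ncard = Nat.card R := by
  have himage : Subtype.val '' (deltaGraph r).neighborSet x =
      (centerSet R ∪ insert x.1 (adHom x.1 ⁻¹' {r, -r}))ᶜ := by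
    ext y
    simp only [deltaGraph, ncGraph, SimpleGraph.comap_adj, Set.mem_image,
      SimpleGraph.mem_neighborSet, Subtype.exists, exists_and_left, exists_prop,
      exists_eq_right_right, Set.mem_compl_iff, Set.mem_union, Set.mem_insert_iff,
      Set.mem_preimage, adHom_apply, Set.mem_singleton_iff, not_or, ne_comm (a := x.1)]
    tauto
  rw [← Set.ncard_image_of_injective _ Subtype.val_injective, himage, add_comm,
    Set.ncard_add_ncard_compl]

omit [Finite R] in
lemma centerSet_union_insert_preimage_zero (x : R) :
    centerSet R ∪ insert x (adHom x ⁻¹' {0, -0}) = (adHom x).ker := by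
  ext y
  simp only [neg_zero, Set.pair_eq_singleton, Set.mem_union, Set.mem_insert_iff,
    Set.mem_preimage, Set.mem_singleton_iff, SetLike.mem_coe, AddMonoidHom.mem_ker]
  refine ⟨?_, fun hy => Or.inr (Or.inr hy)⟩
  rintro (hy | rfl | hy)
  · simp [hy x]
  · simp
  · exact hy

lemma ncard_centerSet_union_insert_preimage {x : R} (hx : x ∉ centerSet R) {r : R}
    (hr : r ≠ 0) :
    (centerSet R ∪ insert x (adHom x ⁻¹' {r, -r})).ncard =
      Nat.card (NonUnitalSubring.center R) + ((adHom x ⁻¹' {r, -r}).ncard + 1) := by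
  have hr' : ∀ y, adHom x y = 0 → y ∉ adHom x ⁻¹' {r, -r} := by
    rintro y hy (h | h) <;> simp_all [eq_comm]
  have hcenter : Nat.card (NonUnitalSubring.center R) = (centerSet R).ncard := by
    rw [← Nat.card_coe_set_eq, Set.ext fun _ => mem_centerSet_iff]
    rfl
  rw [Set.ncard_union_eq, Set.ncard_insert_of_notMem (hr' x (by simp)), hcenter]
  rw [Set.disjoint_left]
  rintro y hy (rfl | hy')
  · exact hx hy
  · exact hr' y (by simp [hy x]) hy'

lemma exists_adHom_eq_of_card_eq_four (hR : Nat.card R = 4) {a b x : R}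
    (hab : a * b - b * a ≠ 0) (hx : x ≠ 0) :
    ∃ y, adHom x y = a * b - b * a ∨ adHom x y = -(a * b - b * a) := by
  have ha : a ≠ 0 := by rintro rfl; simp at hab
  have hb : b ≠ 0 := by rintro rfl; simp at hab
  have hab' : a ≠ b := by rintro rfl; simp at hab
  have hapb : a + b ≠ 0 := by
    intro h
    rw [eq_neg_of_add_eq_zero_right h] at hab
    simp at hab
  have hcard : ({0, a, b, a + b} : Set R).ncard = 4 := by
    rw [Set.ncard_insert_of_notMem, Set.ncard_eq_three.mpr ⟨a, b, a + b, hab', ?_, ?_, rfl⟩]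
    · simpa using hb
    · simpa using ha
    · simp [ha.symm, hb.symm, hapb.symm]
  have hxmem : x ∈ ({0, a, b, a + b} : Set R) := by
    rw [Set.eq_of_subset_of_ncard_le (s := {0, a, b, a + b}) (Set.subset_univ _)
      (by rw [Set.ncard_univ, hR, hcard])]
    trivial
  rcases hxmem with rfl | rfl | rfl | rfl
  · exact absurd rfl hx
  · exact ⟨b, Or.inl rfl⟩
  · exact ⟨a, Or.inr (by simp)⟩
  · exact ⟨b, Or.inl (by simp [add_mul, mul_add])⟩

lemma ncard_neighborSet_deltaGraph_zero_add (x : {a : R // a ∉ centerSet R}) :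
    ((deltaGraph (0 : R)).neighborSet x).ncard + Nat.card (adHom x.1).ker = Nat.card R := by
  have := ncard_neighborSet_deltaGraph_add 0 x
  rwa [centerSet_union_insert_preimage_zero, ← Nat.card_coe_set_eq ((adHom x.1).ker : Set R),
    SetLike.coe_sort_coe] at this

lemma ncard_neighborSet_deltaGraph_zero_eq_two_iff (x : {a : R // a ∉ centerSet R}) :
    ((deltaGraph (0 : R)).neighborSet x).ncard = 2 ↔ Nat.card R = 4 := by
  have hsum := ncard_neighborSet_deltaGraph_zero_add x
  have hz : 0 < Nat.card (NonUnitalSubring.center R) := Nat.card_pos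
  have hzc := card_center_lt_card_ker_adHom x.2
  have hcR := card_ker_adHom_lt_card x.2
  have hcdvd := AddSubgroup.card_addSubgroup_dvd_card (adHom x.1).ker
  set c := Nat.card (adHom x.1).ker
  constructor
  · intro hdeg
    rw [← hsum, hdeg, Nat.dvd_add_left dvd_rfl] at hcdvd
    have := Nat.le_of_dvd two_pos hcdvd
    omega
  · intro hR
    rw [hR] at hcdvd hcR
    interval_cases c <;> omega

lemma ncard_neighborSet_deltaGraph_ne_two (hR8 : Nat.card R ≠ 8) (hR12 : Nat.card R ≠ 12)
    {r : R} (hr : ∃ a b : R, a * b - b * a = r) (hr0 : r ≠ 0)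
    (x : {a : R // a ∉ centerSet R}) :
    ((deltaGraph r).neighborSet x).ncard ≠ 2 := by
  intro hdeg
  have hsum := ncard_neighborSet_deltaGraph_add r x
  rw [hdeg, ncard_centerSet_union_insert_preimage x.2 hr0] at hsum
  obtain ⟨hR4, hfiber⟩ := eq_four_of_dvd_of_lt (card_center_dvd_card_ker_adHom x.1)
    (AddSubgroup.card_addSubgroup_dvd_card _) (card_center_lt_card_ker_adHom x.2)
    (card_ker_adHom_lt_card x.2) ((adHom x.1).ncard_preimage_pair_neg r) (by omega) hR8 hR12
    fun _ hm hR => two_dvd_card_center_of_card_eq_two_mul_odd hm hR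
  obtain ⟨a, b, rfl⟩ := hr
  have hx0 : x.1 ≠ 0 := fun h => x.2 (h ▸ fun _ => by simp)
  obtain ⟨y, hy⟩ := exists_adHom_eq_of_card_eq_four hR4 hr0 hx0
  have hy' : y ∈ adHom x.1 ⁻¹' {a * b - b * a, -(a * b - b * a)} := hy
  rwa [(Set.ncard_eq_zero).mp hfiber] at hy'

end Ring

/-- if R is noncommutative with |R| ≠ 8, 12 and r ∈ K(R), then Δ_R^r
has a vertex of degree 2 iff r = 0 and |R| = 4. -/
theorem stmt18 {R : Type*} [NonUnitalRing R] [Fintype R]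
    (hnc : ∃ a b : R, a * b ≠ b * a) (hcard8 : Nat.card R ≠ 8)
    (hcard12 : Nat.card R ≠ 12)
    (r : R) (hr : ∃ a b : R, a * b - b * a = r) :
    (∃ x : {a : R // a ∉ centerSet R}, ((deltaGraph r).neighborSet x).ncard = 2)
      ↔ (r = 0 ∧ Nat.card R = 4) := by
  constructor
  · rintro ⟨x, hdeg⟩
    by_cases hr0 : r = 0
    · subst hr0
      exact ⟨rfl, (ncard_neighborSet_deltaGraph_zero_eq_two_iff x).mp hdeg⟩
    · exact absurd hdeg (ncard_neighborSet_deltaGraph_ne_two hcard8 hcard12 hr hr0 x)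
  · rintro ⟨rfl, hR⟩
    obtain ⟨a, b, hab⟩ := hnc
    have ha : a ∉ centerSet R := fun ha => hab (ha b)
    exact ⟨⟨a, ha⟩, (ncard_neighborSet_deltaGraph_zero_eq_two_iff _).mpr hR⟩
end
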